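/- arXiv:2605.01760 — 3 statements merged into one kernel-verified Lean document; each statement's English description precedes it below -/
import Mathlib

section
/- For every finite simple graph G, the fourth power sum of the complex roots of the Laplacian matching polynomial satisfies p_4(G) = A_4(G) + 4·A_3(G) + 2·A_2(G) + 4·B(G) − 2·|E(G)|. -/
/-!
Expanding every product `∏_{v ∉ V(M)} (X - d_v)` in `LM_G` shows that the `k`-th elementary
symmetric function of its roots is `∑_{2|M| ≤ k} (-1)^|M| e_{k-2|M|}(d_v : v ∉ V(M))`. For
`k ≤ 4` only the empty matching, single edges and `2`-matchings contribute. Newton's identity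
`p_4 = e_1^4 - 4 e_1^2 e_2 + 2 e_2^2 + 4 e_1 e_3 - 4 e_4`, applied both to the roots and to the
degree sequence, then reduces the claim to double countings over edges:
`∑_{xy ∈ E} (d_x^r + d_y^r) = A_{r+1}` and `C(|E|, 2) = φ_2 + ∑_v C(d_v, 2)`.
-/

open Polynomial Finset

namespace LMRIV

open scoped Classical

variable {V : Type*}

/-- The degree of a vertex. -/
noncomputable def deg [Fintype V] (G : SimpleGraph V) (v : V) : ℕ :=
  (univ.filter fun w => G.Adj v w).card

/-- The finset of edges of `G`. -/
noncomputable def edges [Fintype V] (G : SimpleGraph V) : Finset (Sym2 V) :=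
  univ.filter fun e => e ∈ G.edgeSet

/-- A matching: a set of pairwise disjoint edges. -/
def IsMatching (G : SimpleGraph V) (M : Finset (Sym2 V)) : Prop :=
  (↑M : Set (Sym2 V)) ⊆ G.edgeSet ∧
    ∀ e ∈ M, ∀ f ∈ M, e ≠ f → ∀ x : V, x ∈ e → x ∉ f

/-- The finset of all matchings of `G` (including the empty matching). -/
noncomputable def matchings [Fintype V] (G : SimpleGraph V) : Finset (Finset (Sym2 V)) :=
  univ.filter fun M => IsMatching G M

/-- The set of vertices covered by a matching. -/
noncomputable def covered [Fintype V] (M : Finset (Sym2 V)) : Finset V :=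
  univ.filter fun x => ∃ e ∈ M, x ∈ e

/-- The Laplacian matching polynomial of `G`, with coefficients in `R`. -/
noncomputable def LM (R : Type*) [CommRing R] [Fintype V] (G : SimpleGraph V) :
    Polynomial R :=
  ∑ M ∈ matchings G, (-1 : Polynomial R) ^ M.card *
    ∏ v ∈ univ \ covered M, (X - C (deg G v : R))

/-- `p_r(G)`: the sum of the `r`-th powers of the complex roots of `LM_G`. -/
noncomputable def psum [Fintype V] (G : SimpleGraph V) (r : ℕ) : ℂ :=
  (((LM ℂ G).roots).map (· ^ r)).sum

/-- `A_r(G) = Σ_v d_G(v)^r`. -/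
noncomputable def A [Fintype V] (G : SimpleGraph V) (r : ℕ) : ℕ :=
  ∑ v : V, (deg G v) ^ r

/-- `B(G) = Σ_{xy ∈ E(G)} d_G(x) d_G(y)`. -/
noncomputable def B [Fintype V] (G : SimpleGraph V) : ℕ :=
  ∑ e ∈ edges G, Sym2.lift ⟨fun x y => deg G x * deg G y, fun x y => mul_comm _ _⟩ e

/-- `C(G) = Σ_{xy ∈ E(G)} (d_G(x)^2 d_G(y) + d_G(x) d_G(y)^2)`. -/
noncomputable def Csum [Fintype V] (G : SimpleGraph V) : ℕ :=
  ∑ e ∈ edges G,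
    Sym2.lift ⟨fun x y => deg G x ^ 2 * deg G y + deg G x * deg G y ^ 2,
      fun x y => by ring⟩ e

/-- The graph obtained from `G` by adding the edge `uv`. -/
def addEdge (G : SimpleGraph V) (u v : V) : SimpleGraph V :=
  G ⊔ SimpleGraph.fromEdgeSet {s(u, v)}

/-- `S_w = Σ_{x ∈ N_G(w)} d_G(x)`. -/
noncomputable def Ssum [Fintype V] (G : SimpleGraph V) (w : V) : ℕ :=
  ∑ x ∈ univ.filter fun x => G.Adj w x, deg G x

/-- `T_w = Σ_{x ∈ N_G(w)} d_G(x)^2`. -/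
noncomputable def Tsum [Fintype V] (G : SimpleGraph V) (w : V) : ℕ :=
  ∑ x ∈ univ.filter fun x => G.Adj w x, (deg G x) ^ 2

/-- The `r`-th elementary symmetric polynomial of the degree sequence of `G`. -/
noncomputable def esymmDeg [Fintype V] (G : SimpleGraph V) (r : ℕ) : ℕ :=
  ∑ s ∈ univ.powersetCard r, ∏ v ∈ s, deg G v

/-- `φ_2(G)`: the number of 2-matchings of `G`. -/
noncomputable def phi2 [Fintype V] (G : SimpleGraph V) : ℕ :=
  ((matchings G).filter fun M => M.card = 2).card

end LMRIV

namespace Multiset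

variable {R : Type*} [CommRing R]

theorem esymm_zero (s : Multiset R) : s.esymm 0 = 1 := by
  simp [esymm]

theorem esymm_succ_cons (a : R) (s : Multiset R) (k : ℕ) :
    (a ::ₘ s).esymm (k + 1) = s.esymm (k + 1) + a * s.esymm k := by
  simp [esymm, powersetCard_cons, map_map, ← sum_map_mul_left]

theorem esymm_one (s : Multiset R) : s.esymm 1 = s.sum := by
  simp [esymm, powersetCard_one, map_map]

theorem esymm_eq_zero_of_card_lt {s : Multiset R} {k : ℕ} (h : card s < k) : s.esymm k = 0 := by
  simp [esymm, powersetCard_eq_empty k h]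

theorem two_mul_esymm_two (s : Multiset R) :
    2 * s.esymm 2 = s.sum ^ 2 - (s.map (· ^ 2)).sum := by
  induction s using Multiset.induction with
  | empty => simp [esymm, powersetCard_zero_right]
  | cons a s ih =>
    rw [esymm_succ_cons, esymm_one, sum_cons, map_cons, sum_cons]
    linear_combination ih

theorem sum_map_pow_four (s : Multiset R) :
    (s.map (· ^ 4)).sum = s.esymm 1 ^ 4 - 4 * s.esymm 1 ^ 2 * s.esymm 2 + 2 * s.esymm 2 ^ 2
      + 4 * s.esymm 1 * s.esymm 3 - 4 * s.esymm 4 := by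
  induction s using Multiset.induction with
  | empty => simp [esymm, powersetCard_zero_right]
  | cons a s ih =>
    rw [map_cons, sum_cons, ih, esymm_succ_cons a s 0, esymm_succ_cons a s 1,
      esymm_succ_cons a s 2, esymm_succ_cons a s 3, esymm_zero]
    ring

theorem prod_X_sub_C_coeff_sub (s : Multiset R) {j k n : ℕ} (hn : card s + j = n) (hk : k ≤ n) :
    (s.map fun t => Polynomial.X - Polynomial.C t).prod.coeff (n - k) =
      if j ≤ k then (-1) ^ (k - j) * s.esymm (k - j) else 0 := by
  split_ifs with hjk
  · rw [prod_X_sub_C_coeff s (by omega), show card s - (n - k) = k - j by omega]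
  · nontriviality R
    apply Polynomial.coeff_eq_zero_of_natDegree_lt
    rw [Polynomial.natDegree_multiset_prod_X_sub_C_eq_card]
    omega

end Multiset

namespace Finset

lemma sum_filter_two_mul_card_le {α β : Type*} [AddCommMonoid β] (s : Finset (Finset α))
    (F : ℕ → Finset α → β) (k : ℕ) : ∑ M ∈ s with 2 * #M ≤ k, F #M M =
      ∑ j ∈ range (k / 2 + 1), ∑ M ∈ s with #M = j, F j M := by
  rw [← sum_fiberwise_of_maps_to (g := card) (t := range (k / 2 + 1))
    (fun M hM => by simp only [mem_filter] at hM; simp only [mem_range]; omega)]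
  refine sum_congr rfl fun j hj => ?_
  rw [filter_filter]
  refine sum_congr (filter_congr fun M _ => ?_) fun M hM => by rw [(mem_filter.1 hM).2]
  simp only [mem_range] at hj
  omega

end Finset

namespace LMRIV

open scoped Classical

variable {V : Type*}

lemma isMatching_pair (G : SimpleGraph V) {e f : Sym2 V} (hef : e ≠ f) :
    IsMatching G {e, f} ↔ e ∈ G.edgeSet ∧ f ∈ G.edgeSet ∧ ∀ x ∈ e, x ∉ f := by
  simp only [IsMatching, coe_pair, Set.insert_subset_iff, Set.singleton_subset_iff, mem_insert,
    mem_singleton]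
  constructor
  · rintro ⟨hedges, hdisj⟩
    exact ⟨hedges.1, hedges.2, hdisj e (.inl rfl) f (.inr rfl) hef⟩
  · rintro ⟨he, hf, hdisj⟩
    refine ⟨⟨he, hf⟩, ?_⟩
    rintro a (rfl | rfl) b (rfl | rfl) hab x hxa hxb
    exacts [hab rfl, hdisj x hxa hxb, hdisj x hxb hxa, hab rfl]

section

variable [Fintype V] (G : SimpleGraph V)

lemma deg_eq_degree (v : V) : deg G v = G.degree v := by
  rw [deg, ← G.card_neighborFinset_eq_degree, G.neighborFinset_eq_filter]

lemma edges_eq_edgeFinset : edges G = G.edgeFinset := by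
  ext e; simp [edges]

lemma adj_of_mk_mem_edges {x y : V} (h : s(x, y) ∈ edges G) : G.Adj x y := by
  simpa [edges] using h

lemma card_edges_filter_mem (v : V) : #{e ∈ edges G | v ∈ e} = deg G v := by
  rw [deg_eq_degree, ← G.card_incidenceFinset_eq_degree, G.incidenceFinset_eq_filter,
    edges_eq_edgeFinset]

lemma A_one : A G 1 = 2 * #(edges G) := by
  simp_rw [A, pow_one, deg_eq_degree, edges_eq_edgeFinset]
  convert G.sum_degrees_eq_twice_card_edges

lemma covered_empty : covered (∅ : Finset (Sym2 V)) = ∅ := by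
  simp [covered]

lemma covered_singleton (e : Sym2 V) : covered {e} = ({v | v ∈ e} : Finset V) := by
  ext v; simp [covered]

lemma covered_singleton_mk {x y : V} : covered {s(x, y)} = {x, y} := by
  ext v; simp [covered]

lemma card_covered_singleton {e : Sym2 V} (he : e ∈ edges G) : #(covered {e}) = 2 := by
  induction e using Sym2.ind with
  | _ x y =>
    rw [covered_singleton_mk, card_pair (adj_of_mk_mem_edges G he).ne]

lemma sum_edges_sum_covered {R : Type*} [CommSemiring R] (f : V → R) :
    ∑ e ∈ edges G, ∑ v ∈ covered {e}, f v = ∑ v, (deg G v : R) * f v := by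
  simp_rw [covered_singleton, sum_filter]
  rw [sum_comm]
  refine sum_congr rfl fun v _ => ?_
  rw [← sum_filter, sum_const, card_edges_filter_mem, nsmul_eq_mul]

lemma sum_edges_sum_covered_pow (r : ℕ) :
    ∑ e ∈ edges G, ∑ v ∈ covered {e}, (deg G v : ℂ) ^ r = A G (r + 1) := by
  rw [sum_edges_sum_covered, A]
  push_cast
  simp_rw [pow_succ']

lemma sq_sum_covered_singleton {R : Type*} [CommSemiring R] {e : Sym2 V} (he : e ∈ edges G)
    (f : V → R) : (∑ v ∈ covered {e}, f v) ^ 2 =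
      ∑ v ∈ covered {e}, f v ^ 2 + 2 * ∏ v ∈ covered {e}, f v := by
  induction e using Sym2.ind with
  | _ x y =>
    have hxy := (adj_of_mk_mem_edges G he).ne
    rw [covered_singleton_mk, sum_pair hxy, sum_pair hxy, prod_pair hxy]
    ring

lemma cast_B_eq_sum_prod_covered : (B G : ℂ) = ∑ e ∈ edges G, ∏ v ∈ covered {e}, (deg G v : ℂ) := by
  rw [B, Nat.cast_sum]
  refine sum_congr rfl fun e he => ?_
  induction e using Sym2.ind with
  | _ x y =>
    rw [covered_singleton_mk, prod_pair (adj_of_mk_mem_edges G he).ne, Sym2.lift_mk]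
    push_cast
    rfl

lemma mem_matchings {M : Finset (Sym2 V)} : M ∈ matchings G ↔ IsMatching G M := by
  simp [matchings]

lemma mem_edges_of_mem_matchings {M : Finset (Sym2 V)} (hM : M ∈ matchings G) {e : Sym2 V}
    (he : e ∈ M) : e ∈ edges G := by
  simpa [edges] using ((mem_matchings G).1 hM).1 he

lemma singleton_mem_matchings {e : Sym2 V} (he : e ∈ edges G) : {e} ∈ matchings G := by
  simp_all [mem_matchings, IsMatching, edges]

lemma card_covered {M : Finset (Sym2 V)} (hM : M ∈ matchings G) : #(covered M) = 2 * #M := by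
  have hunion : covered M = M.biUnion fun e => covered {e} := by
    ext v; simp [covered]
  have hdisj : (M : Set (Sym2 V)).PairwiseDisjoint fun e => covered {e} := by
    intro e he f hf hef
    simp only [Function.onFun, covered_singleton, Finset.disjoint_filter]
    exact fun x _ => ((mem_matchings G).1 hM).2 e he f hf hef x
  rw [hunion, card_biUnion hdisj, sum_congr rfl fun e he =>
    card_covered_singleton G (mem_edges_of_mem_matchings G hM he), sum_const, smul_eq_mul,
    mul_comm]

lemma sum_filter_matchings_card_eq_zero {β : Type*} [AddCommMonoid β]
    (F : Finset (Sym2 V) → β) : ∑ M ∈ matchings G with #M = 0, F M = F ∅ := by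
  have hfilter : {M ∈ matchings G | #M = 0} = {∅} := by
    ext M
    simp only [mem_filter, mem_singleton, card_eq_zero, and_iff_right_iff_imp]
    rintro rfl
    simp [mem_matchings, IsMatching]
  rw [hfilter, sum_singleton]

lemma sum_filter_matchings_card_eq_one {β : Type*} [AddCommMonoid β]
    (F : Finset (Sym2 V) → β) :
    ∑ M ∈ matchings G with #M = 1, F M = ∑ e ∈ edges G, F {e} := by
  have hfilter : {M ∈ matchings G | #M = 1} = (edges G).map ⟨_, singleton_injective⟩ := by
    ext M
    simp only [mem_filter, card_eq_one, mem_map, Function.Embedding.coeFn_mk]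
    constructor
    · rintro ⟨hM, e, rfl⟩
      exact ⟨e, mem_edges_of_mem_matchings G hM (mem_singleton_self e), rfl⟩
    · rintro ⟨e, he, rfl⟩
      exact ⟨singleton_mem_matchings G he, e, rfl⟩
  rw [hfilter, sum_map]
  rfl

/-- Two distinct edges either form a `2`-matching or share exactly one vertex `v`, i.e. form a
pair of edges at `v`. -/
lemma choose_card_edges_two :
    (#(edges G)).choose 2 = phi2 G + ∑ v, (deg G v).choose 2 := by
  have hmatch : {M ∈ (edges G).powersetCard 2 | IsMatching G M} =
      {M ∈ matchings G | #M = 2} := by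
    ext M
    simp only [mem_filter, mem_powersetCard, mem_matchings]
    refine ⟨fun h => ⟨h.2, h.1.2⟩, fun h => ⟨⟨fun e he => ?_, h.2⟩, h.1⟩⟩
    simpa [edges] using h.1.1 he
  have hmeet : {M ∈ (edges G).powersetCard 2 | ¬ IsMatching G M} =
      univ.biUnion fun v => {e ∈ edges G | v ∈ e}.powersetCard 2 := by
    ext M
    simp only [mem_filter, mem_powersetCard, mem_biUnion, mem_univ, true_and]
    constructor
    · rintro ⟨⟨hsub, hcard⟩, hnot⟩
      obtain ⟨e, f, hef, rfl⟩ := card_eq_two.1 hcard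
      have he : e ∈ edges G := hsub (mem_insert_self e {f})
      have hf : f ∈ edges G := hsub (mem_insert_of_mem (mem_singleton_self f))
      rw [isMatching_pair G hef] at hnot
      push Not at hnot
      obtain ⟨x, hxe, hxf⟩ := hnot (by simpa [edges] using he) (by simpa [edges] using hf)
      exact ⟨x, by simp [insert_subset_iff, he, hf, hxe, hxf], card_pair hef⟩
    · rintro ⟨v, hsub, hcard⟩
      obtain ⟨e, f, hef, rfl⟩ := card_eq_two.1 hcard
      simp only [insert_subset_iff, singleton_subset_iff, mem_filter] at hsub
      refine ⟨⟨insert_subset hsub.1.1 (singleton_subset_iff.2 hsub.2.1), card_pair hef⟩, ?_⟩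
      rw [isMatching_pair G hef]
      exact fun h => h.2.2 v hsub.1.2 hsub.2.2
  have hdisj : ((univ : Finset V) : Set V).PairwiseDisjoint
      fun v => {e ∈ edges G | v ∈ e}.powersetCard 2 := by
    intro v _ w _ hvw
    rw [Function.onFun, disjoint_left]
    intro M hMv hMw
    rw [mem_powersetCard] at hMv hMw
    obtain ⟨e, f, hef, rfl⟩ := card_eq_two.1 hMv.2
    simp only [insert_subset_iff, singleton_subset_iff, mem_filter] at hMv hMw
    exact hef (((Sym2.mem_and_mem_iff hvw).1 ⟨hMv.1.1.2, hMw.1.1.2⟩).trans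
      ((Sym2.mem_and_mem_iff hvw).1 ⟨hMv.1.2.2, hMw.1.2.2⟩).symm)
  rw [← card_powersetCard, ← card_filter_add_card_filter_not (IsMatching G), hmatch,
    hmeet, card_biUnion hdisj]
  simp [card_powersetCard, card_edges_filter_mem, phi2]

lemma two_mul_phi2 : 2 * (phi2 G : ℂ) = #(edges G) ^ 2 + #(edges G) - A G 2 := by
  have hchoose := congrArg (Nat.cast : ℕ → ℂ) (choose_card_edges_two G)
  have hA1 : (A G 1 : ℂ) = 2 * #(edges G) := by exact_mod_cast A_one G
  simp only [Nat.cast_add, Nat.cast_sum, Nat.cast_choose_two] at hchoose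
  rw [A, Nat.cast_sum] at hA1 ⊢
  push_cast at hA1 ⊢
  simp only [pow_one] at hA1
  simp only [← sum_div, mul_sub_one, ← sq, sum_sub_distrib] at hchoose
  linear_combination -2 * hchoose + hA1

noncomputable def degreesOff (M : Finset (Sym2 V)) : Multiset ℂ :=
  (univ \ covered M).val.map fun v => (deg G v : ℂ)

lemma card_degreesOff_add {M : Finset (Sym2 V)} (hM : M ∈ matchings G) :
    Multiset.card (degreesOff G M) + 2 * #M = Fintype.card V := by
  rw [degreesOff, Multiset.card_map, ← Finset.card_def, card_sdiff_of_subset (subset_univ _),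
    card_univ, ← card_covered G hM, Nat.sub_add_cancel (card_le_univ _)]

lemma sum_map_pow_degreesOff (M : Finset (Sym2 V)) (r : ℕ) :
    ((degreesOff G M).map (· ^ r)).sum = A G r - ∑ v ∈ covered M, (deg G v : ℂ) ^ r := by
  rw [degreesOff, Multiset.map_map, ← Finset.sum_eq_multiset_sum, A, Nat.cast_sum,
    sum_sdiff_eq_sub (subset_univ _)]
  push_cast
  rfl

lemma sum_degreesOff (M : Finset (Sym2 V)) :
    (degreesOff G M).sum = A G 1 - ∑ v ∈ covered M, (deg G v : ℂ) := by
  simpa using sum_map_pow_degreesOff G M 1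

lemma sum_esymm_one_degreesOff_singleton :
    ∑ e ∈ edges G, (degreesOff G {e}).esymm 1 = #(edges G) * (A G 1 : ℂ) - A G 2 := by
  simp_rw [Multiset.esymm_one, sum_degreesOff, sum_sub_distrib, sum_const, nsmul_eq_mul]
  simpa using sum_edges_sum_covered_pow G 1

lemma two_mul_sum_esymm_two_degreesOff_singleton :
    2 * ∑ e ∈ edges G, (degreesOff G {e}).esymm 2 = #(edges G) * ((A G 1 : ℂ) ^ 2 - A G 2)
      - 2 * A G 1 * A G 2 + 2 * A G 3 + 2 * B G := by
  have hedge : ∀ e ∈ edges G, 2 * (degreesOff G {e}).esymm 2 = ((A G 1 : ℂ) ^ 2 - A G 2)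
      - 2 * A G 1 * ∑ v ∈ covered {e}, (deg G v : ℂ)
      + 2 * ∑ v ∈ covered {e}, (deg G v : ℂ) ^ 2 + 2 * ∏ v ∈ covered {e}, (deg G v : ℂ) := by
    intro e he
    rw [Multiset.two_mul_esymm_two, sum_degreesOff, sum_map_pow_degreesOff]
    linear_combination sq_sum_covered_singleton G he fun v => (deg G v : ℂ)
  have hA2 : ∑ e ∈ edges G, ∑ v ∈ covered {e}, (deg G v : ℂ) = A G 2 := by
    simpa using sum_edges_sum_covered_pow G 1
  rw [mul_sum, sum_congr rfl hedge]
  simp only [sum_add_distrib, sum_sub_distrib, sum_const, nsmul_eq_mul, ← mul_sum, hA2,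
    sum_edges_sum_covered_pow, cast_B_eq_sum_prod_covered]
  ring

noncomputable def matchingEsymm (k : ℕ) : ℂ :=
  ∑ M ∈ matchings G with 2 * #M ≤ k, (-1) ^ #M * (degreesOff G M).esymm (k - 2 * #M)

lemma coeff_LM {k : ℕ} (hk : k ≤ Fintype.card V) :
    (LM ℂ G).coeff (Fintype.card V - k) = (-1) ^ k * matchingEsymm G k := by
  rw [LM, finsetSum_coeff, matchingEsymm, sum_filter, mul_sum]
  refine sum_congr rfl fun M hM => ?_
  have hprod : ∏ v ∈ univ \ covered M, (X - C (deg G v : ℂ)) =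
      ((degreesOff G M).map fun t => X - C t).prod := by
    rw [degreesOff, Multiset.map_map]; rfl
  rw [show (-1 : ℂ[X]) ^ #M = C ((-1) ^ #M) by simp, coeff_C_mul, hprod,
    Multiset.prod_X_sub_C_coeff_sub _ (card_degreesOff_add G hM) hk]
  split_ifs with hMk
  · obtain ⟨i, rfl⟩ := Nat.exists_eq_add_of_le hMk
    simp only [Nat.add_sub_cancel_left, pow_add, pow_mul, neg_one_sq, one_pow, one_mul]
    ring
  · simp

lemma matchingEsymm_eq_sum_range (k : ℕ) : matchingEsymm G k =
    ∑ j ∈ range (k / 2 + 1), (-1) ^ j * ∑ M ∈ matchings G with #M = j,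
      (degreesOff G M).esymm (k - 2 * j) := by
  simp_rw [mul_sum]
  exact sum_filter_two_mul_card_le (matchings G)
    (fun j M => (-1) ^ j * (degreesOff G M).esymm (k - 2 * j)) k

lemma matchingEsymm_zero : matchingEsymm G 0 = 1 := by
  rw [matchingEsymm_eq_sum_range]
  simp only [Nat.zero_div, zero_add, sum_range_one, sum_filter_matchings_card_eq_zero]
  simp [Multiset.esymm_zero]

lemma coeff_LM_card : (LM ℂ G).coeff (Fintype.card V) = 1 := by
  simpa [matchingEsymm_zero] using coeff_LM G (Nat.zero_le _)

lemma natDegree_LM : (LM ℂ G).natDegree = Fintype.card V := by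
  refine le_antisymm (natDegree_sum_le_of_forall_le _ _ fun M _ => ?_)
    (le_natDegree_of_ne_zero (by simp [coeff_LM_card]))
  refine natDegree_mul_le.trans ?_
  rw [natDegree_finsetProd_X_sub_C_eq_card]
  simpa using card_le_univ (univ \ covered M)

lemma monic_LM : (LM ℂ G).Monic := by
  rw [Monic, leadingCoeff, natDegree_LM, coeff_LM_card]

lemma esymm_roots_LM (k : ℕ) : (LM ℂ G).roots.esymm k = matchingEsymm G k := by
  have hcard : Multiset.card (LM ℂ G).roots = Fintype.card V := by
    rw [splits_iff_card_roots.1 (IsAlgClosed.splits _), natDegree_LM]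
  by_cases hk : k ≤ Fintype.card V
  · have hvieta := coeff_eq_esymm_roots_of_splits (IsAlgClosed.splits (LM ℂ G))
      (k := Fintype.card V - k) (by rw [natDegree_LM]; omega)
    rw [(monic_LM G).leadingCoeff, natDegree_LM, Nat.sub_sub_self hk, coeff_LM G hk,
      one_mul] at hvieta
    exact (mul_left_cancel₀ (pow_ne_zero _ (neg_ne_zero.2 one_ne_zero)) hvieta).symm
  · rw [Multiset.esymm_eq_zero_of_card_lt (by omega), matchingEsymm]
    refine (sum_eq_zero fun M hM => ?_).symm
    rw [mem_filter] at hM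
    have := card_degreesOff_add G hM.1
    rw [Multiset.esymm_eq_zero_of_card_lt (by omega), mul_zero]

lemma matchingEsymm_one : matchingEsymm G 1 = (degreesOff G ∅).esymm 1 := by
  rw [matchingEsymm_eq_sum_range]
  simp only [Nat.reduceDiv, zero_add, sum_range_one, sum_filter_matchings_card_eq_zero]
  simp

lemma matchingEsymm_two :
    matchingEsymm G 2 = (degreesOff G ∅).esymm 2 - #(edges G) := by
  rw [matchingEsymm_eq_sum_range]
  simp only [sum_range_succ, sum_range_zero, sum_filter_matchings_card_eq_zero,
    sum_filter_matchings_card_eq_one]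
  simp [Multiset.esymm_zero]
  ring

lemma matchingEsymm_three : matchingEsymm G 3 =
    (degreesOff G ∅).esymm 3 - ∑ e ∈ edges G, (degreesOff G {e}).esymm 1 := by
  rw [matchingEsymm_eq_sum_range]
  simp only [sum_range_succ, sum_range_zero, sum_filter_matchings_card_eq_zero,
    sum_filter_matchings_card_eq_one]
  simp
  ring

lemma matchingEsymm_four : matchingEsymm G 4 = (degreesOff G ∅).esymm 4 -
    ∑ e ∈ edges G, (degreesOff G {e}).esymm 2 + phi2 G := by
  rw [matchingEsymm_eq_sum_range]
  simp only [sum_range_succ, sum_range_zero, sum_filter_matchings_card_eq_zero,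
    sum_filter_matchings_card_eq_one]
  simp [Multiset.esymm_zero, phi2]
  ring

end

/-- `p_4(G) = A_4 + 4 A_3 + 2 A_2 + 4 B - 2 |E(G)|`. -/
theorem p4_identity [Fintype V] (G : SimpleGraph V) :
    psum G 4 = (A G 4 : ℂ) + 4 * (A G 3 : ℂ) + 2 * (A G 2 : ℂ) + 4 * (B G : ℂ)
      - 2 * ((edges G).card : ℂ) := by
  have hroots := Multiset.sum_map_pow_four (LM ℂ G).roots
  simp only [esymm_roots_LM, matchingEsymm_one, matchingEsymm_two, matchingEsymm_three,
    matchingEsymm_four] at hroots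
  have hdeg := Multiset.sum_map_pow_four (degreesOff G ∅)
  have he1 := Multiset.esymm_one (degreesOff G ∅)
  have he2 := Multiset.two_mul_esymm_two (degreesOff G ∅)
  simp only [sum_map_pow_degreesOff, sum_degreesOff, covered_empty, sum_empty, sub_zero]
    at hdeg he1 he2
  rw [psum]
  linear_combination hroots - hdeg - 2 * (#(edges G) : ℂ) * he2
    - 4 * (degreesOff G ∅).esymm 1 * sum_esymm_one_degreesOff_singleton G
    + 2 * two_mul_sum_esymm_two_degreesOff_singleton G - 2 * two_mul_phi2 G
    + (4 * (#(edges G) : ℂ) * (degreesOff G ∅).esymm 1 + 4 * A G 2) * he1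

end LMRIV
end

section
/- Let G be a finite simple graph and let uv be a non-edge of G with a = d_G(u) and b = d_G(v). Then C(G+uv) − C(G) = (2a+1)·S_u + T_u + (2b+1)·S_v + T_v + (a+1)(b+1)(a+b+2), where C(H) = Σ_{xy∈E(H)} (d_H(x)²·d_H(y) + d_H(x)·d_H(y)²), S_w = Σ_{x∈N_G(w)} d_G(x), and T_w = Σ_{x∈N_G(w)} d_G(x)². -/
open Polynomial Finset

namespace LMRIV

open scoped Classical

variable {V : Type*}

section Helpers
variable [Fintype V]

lemma addEdge_comm (G : SimpleGraph V) (u v : V) : addEdge G u v = addEdge G v u := by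
  unfold addEdge; rw [Sym2.eq_swap]

lemma adj_addEdge (G : SimpleGraph V) (u v : V) (huv : u ≠ v) (a b : V) :
    (addEdge G u v).Adj a b ↔ G.Adj a b ∨ s(a, b) = s(u, v) := by
  simp only [addEdge, SimpleGraph.sup_adj, SimpleGraph.fromEdgeSet_adj, Set.mem_singleton_iff]
  constructor
  · rintro (h | ⟨h, -⟩)
    · exact Or.inl h
    · exact Or.inr h
  · rintro (h | h)
    · exact Or.inl h
    · refine Or.inr ⟨h, ?_⟩
      rintro rfl
      rw [Sym2.eq_iff] at h
      rcases h with ⟨rfl, rfl⟩ | ⟨rfl, rfl⟩ <;> exact huv rfl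

lemma deg_addEdge_left (G : SimpleGraph V) (u v : V) (huv : u ≠ v) (hne : ¬ G.Adj u v) :
    deg (addEdge G u v) u = deg G u + 1 := by
  unfold deg
  have h : (univ.filter fun w => (addEdge G u v).Adj u w) =
      insert v (univ.filter fun w => G.Adj u w) := by
    ext w
    simp only [mem_filter, mem_univ, true_and, mem_insert, adj_addEdge G u v huv, Sym2.eq_iff]
    tauto
  rw [h, Finset.card_insert_of_notMem (by simp [hne])]

lemma deg_addEdge_other (G : SimpleGraph V) (u v w : V) (huv : u ≠ v) (hwu : w ≠ u)
    (hwv : w ≠ v) : deg (addEdge G u v) w = deg G w := by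
  unfold deg
  congr 1
  ext x
  simp only [mem_filter, mem_univ, true_and, adj_addEdge G u v huv]
  constructor
  · rintro (h | h)
    · exact h
    · rw [Sym2.eq_iff] at h
      rcases h with ⟨rfl, -⟩ | ⟨rfl, -⟩
      · exact absurd rfl hwu
      · exact absurd rfl hwv
  · exact Or.inl

lemma edges_addEdge (G : SimpleGraph V) (u v : V) (huv : u ≠ v) :
    edges (addEdge G u v) = insert s(u, v) (edges G) := by
  ext e
  simp only [edges, mem_filter, mem_univ, true_and, mem_insert, addEdge,
    SimpleGraph.edgeSet_sup, SimpleGraph.edgeSet_fromEdgeSet, Set.mem_union, Set.mem_diff,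
    Set.mem_singleton_iff, Set.mem_setOf_eq]
  constructor
  · rintro (h | ⟨rfl, -⟩)
    · exact Or.inr h
    · exact Or.inl rfl
  · rintro (rfl | h)
    · exact Or.inr ⟨rfl, by simp [huv]⟩
    · exact Or.inl h

lemma filter_mem_edges (G : SimpleGraph V) (u : V) :
    (edges G).filter (fun e => u ∈ e) =
      (univ.filter fun x => G.Adj u x).image (fun x => s(u, x)) := by
  ext e
  induction e using Sym2.ind with
  | _ a b =>
    simp only [mem_filter, mem_image, mem_univ, true_and, edges, SimpleGraph.mem_edgeSet,
      Sym2.mem_iff]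
    constructor
    · rintro ⟨hadj, rfl | rfl⟩
      · exact ⟨b, hadj, rfl⟩
      · exact ⟨a, hadj.symm, Sym2.eq_swap⟩
    · rintro ⟨x, hx, h⟩
      rw [Sym2.eq_iff] at h
      rcases h with ⟨rfl, rfl⟩ | ⟨rfl, rfl⟩
      · exact ⟨hx, Or.inl rfl⟩
      · exact ⟨hx.symm, Or.inr rfl⟩

lemma sum_filter_mem_edges (G : SimpleGraph V) (u : V) (g : Sym2 V → ℤ) :
    ∑ e ∈ (edges G).filter (fun e => u ∈ e), g e =
      ∑ x ∈ univ.filter (fun x => G.Adj u x), g s(u, x) := by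
  rw [filter_mem_edges, Finset.sum_image]
  intro x _ y _ h
  exact Sym2.congr_right.mp h

lemma sum_edges_split (G : SimpleGraph V) (u v : V) (huv : u ≠ v) (hne : ¬ G.Adj u v)
    (g : Sym2 V → ℤ) :
    ∑ e ∈ edges G, g e =
      (∑ x ∈ univ.filter (fun x => G.Adj u x), g s(u, x))
      + (∑ x ∈ univ.filter (fun x => G.Adj v x), g s(v, x))
      + ∑ e ∈ (edges G).filter (fun e => u ∉ e ∧ v ∉ e), g e := by
  have h1 := Finset.sum_filter_add_sum_filter_not (edges G) (fun e => u ∈ e) g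
  have h2 := Finset.sum_filter_add_sum_filter_not ((edges G).filter (fun e => ¬ u ∈ e))
      (fun e => v ∈ e) g
  have h3 : ((edges G).filter (fun e => ¬ u ∈ e)).filter (fun e => v ∈ e) =
      (edges G).filter (fun e => v ∈ e) := by
    rw [Finset.filter_filter]
    apply Finset.filter_congr
    intro e he
    simp only [edges, mem_filter, mem_univ, true_and, SimpleGraph.mem_edgeSet] at he
    constructor
    · rintro ⟨-, h⟩; exact h
    · intro hv
      refine ⟨fun hu => ?_, hv⟩
      have heq : e = s(u, v) := (Sym2.mem_and_mem_iff huv).mp ⟨hu, hv⟩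
      rw [heq] at he
      exact hne he
  have h4 : ((edges G).filter (fun e => ¬ u ∈ e)).filter (fun e => ¬ v ∈ e) =
      (edges G).filter (fun e => u ∉ e ∧ v ∉ e) := by
    rw [Finset.filter_filter]
  rw [h3, h4] at h2
  rw [← h1, ← h2, sum_filter_mem_edges G u g, sum_filter_mem_edges G v g]
  ring

lemma csum_cast (G : SimpleGraph V) :
    (Csum G : ℤ) = ∑ e ∈ edges G,
      Sym2.lift ⟨fun x y => (deg G x : ℤ) ^ 2 * (deg G y) + (deg G x) * (deg G y) ^ 2,
        fun x y => by ring⟩ e := by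
  rw [Csum, Nat.cast_sum]
  apply Finset.sum_congr rfl
  intro e _
  induction e using Sym2.ind with
  | _ a b =>
    simp only [Sym2.lift_mk]
    push_cast
    ring

end Helpers

/-- `C(G+uv) - C(G) = (2a+1) S_u + T_u + (2b+1) S_v + T_v + (a+1)(b+1)(a+b+2)`
where `a = d_G(u)`, `b = d_G(v)`. -/
theorem deltaC [Fintype V] (G : SimpleGraph V) (u v : V) (huv : u ≠ v)
    (hne : ¬ G.Adj u v) :
    (Csum (addEdge G u v) : ℤ) - (Csum G : ℤ) =
      (2 * (deg G u : ℤ) + 1) * (Ssum G u : ℤ) + (Tsum G u : ℤ)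
        + (2 * (deg G v : ℤ) + 1) * (Ssum G v : ℤ) + (Tsum G v : ℤ)
        + ((deg G u : ℤ) + 1) * ((deg G v : ℤ) + 1) * ((deg G u : ℤ) + (deg G v : ℤ) + 2) := by
  classical
  have hvu : v ≠ u := huv.symm
  have hnev : ¬ G.Adj v u := fun h => hne h.symm
  set G' := addEdge G u v with hG'
  set a : ℤ := (deg G u : ℤ) with ha
  set b : ℤ := (deg G v : ℤ) with hb
  have hdu : (deg G' u : ℤ) = a + 1 := by
    rw [hG', deg_addEdge_left G u v huv hne]; push_cast; rfl
  have hdv : (deg G' v : ℤ) = b + 1 := by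
    rw [hG', addEdge_comm, deg_addEdge_left G v u hvu hnev]; push_cast; rfl
  have hdo : ∀ w, w ≠ u → w ≠ v → (deg G' w : ℤ) = (deg G w : ℤ) := by
    intro w h1 h2
    rw [hG', deg_addEdge_other G u v w huv h1 h2]
  have hsuv : s(u, v) ∉ edges G := by
    simp [edges, SimpleGraph.mem_edgeSet, hne]
  rw [csum_cast, csum_cast, hG', edges_addEdge G u v huv, ← hG',
    Finset.sum_insert hsuv, sum_edges_split G u v huv hne, sum_edges_split G u v huv hne]
  -- rewrite each piece
  have hrest : ∑ e ∈ (edges G).filter (fun e => u ∉ e ∧ v ∉ e),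
      Sym2.lift ⟨fun x y => (deg G' x : ℤ) ^ 2 * (deg G' y) + (deg G' x) * (deg G' y) ^ 2,
        fun x y => by ring⟩ e
      = ∑ e ∈ (edges G).filter (fun e => u ∉ e ∧ v ∉ e),
      Sym2.lift ⟨fun x y => (deg G x : ℤ) ^ 2 * (deg G y) + (deg G x) * (deg G y) ^ 2,
        fun x y => by ring⟩ e := by
    apply Finset.sum_congr rfl
    intro e he
    induction e using Sym2.ind with
    | _ x y =>
      simp only [mem_filter, Sym2.mem_iff] at he
      obtain ⟨-, hu', hv'⟩ := he
      push_neg at hu' hv'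
      simp only [Sym2.lift_mk]
      rw [hdo x (fun h => hu'.1 h.symm) (fun h => hv'.1 h.symm),
        hdo y (fun h => hu'.2 h.symm) (fun h => hv'.2 h.symm)]
  have hNu : ∀ x ∈ univ.filter (fun x => G.Adj u x), x ≠ u ∧ x ≠ v := by
    intro x hx
    simp only [mem_filter, mem_univ, true_and] at hx
    exact ⟨fun h => G.irrefl (h ▸ hx), fun h => hne (h ▸ hx)⟩
  have hNv : ∀ x ∈ univ.filter (fun x => G.Adj v x), x ≠ u ∧ x ≠ v := by
    intro x hx
    simp only [mem_filter, mem_univ, true_and] at hx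
    exact ⟨fun h => hnev (h ▸ hx), fun h => G.irrefl (h ▸ hx)⟩
  have hSu : (Ssum G u : ℤ) = ∑ x ∈ univ.filter (fun x => G.Adj u x), (deg G x : ℤ) := by
    rw [Ssum]; push_cast; rfl
  have hTu : (Tsum G u : ℤ) = ∑ x ∈ univ.filter (fun x => G.Adj u x), (deg G x : ℤ) ^ 2 := by
    rw [Tsum]; push_cast; rfl
  have hSv : (Ssum G v : ℤ) = ∑ x ∈ univ.filter (fun x => G.Adj v x), (deg G x : ℤ) := by
    rw [Ssum]; push_cast; rfl
  have hTv : (Tsum G v : ℤ) = ∑ x ∈ univ.filter (fun x => G.Adj v x), (deg G x : ℤ) ^ 2 := by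
    rw [Tsum]; push_cast; rfl
  have hu' : ∑ x ∈ univ.filter (fun x => G.Adj u x),
      Sym2.lift ⟨fun x y => (deg G' x : ℤ) ^ 2 * (deg G' y) + (deg G' x) * (deg G' y) ^ 2,
        fun x y => by ring⟩ s(u, x)
      = (a + 1) ^ 2 * (Ssum G u : ℤ) + (a + 1) * (Tsum G u : ℤ) := by
    rw [hSu, hTu, Finset.mul_sum, Finset.mul_sum, ← Finset.sum_add_distrib]
    apply Finset.sum_congr rfl
    intro x hx
    obtain ⟨h1, h2⟩ := hNu x hx
    simp only [Sym2.lift_mk]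
    rw [hdu, hdo x h1 h2]
  have hv' : ∑ x ∈ univ.filter (fun x => G.Adj v x),
      Sym2.lift ⟨fun x y => (deg G' x : ℤ) ^ 2 * (deg G' y) + (deg G' x) * (deg G' y) ^ 2,
        fun x y => by ring⟩ s(v, x)
      = (b + 1) ^ 2 * (Ssum G v : ℤ) + (b + 1) * (Tsum G v : ℤ) := by
    rw [hSv, hTv, Finset.mul_sum, Finset.mul_sum, ← Finset.sum_add_distrib]
    apply Finset.sum_congr rfl
    intro x hx
    obtain ⟨h1, h2⟩ := hNv x hx
    simp only [Sym2.lift_mk]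
    rw [hdv, hdo x h1 h2]
  have hu0 : ∑ x ∈ univ.filter (fun x => G.Adj u x),
      Sym2.lift ⟨fun x y => (deg G x : ℤ) ^ 2 * (deg G y) + (deg G x) * (deg G y) ^ 2,
        fun x y => by ring⟩ s(u, x)
      = a ^ 2 * (Ssum G u : ℤ) + a * (Tsum G u : ℤ) := by
    rw [hSu, hTu, Finset.mul_sum, Finset.mul_sum, ← Finset.sum_add_distrib]
    apply Finset.sum_congr rfl
    intro x _
    simp only [Sym2.lift_mk]; rfl
  have hv0 : ∑ x ∈ univ.filter (fun x => G.Adj v x),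
      Sym2.lift ⟨fun x y => (deg G x : ℤ) ^ 2 * (deg G y) + (deg G x) * (deg G y) ^ 2,
        fun x y => by ring⟩ s(v, x)
      = b ^ 2 * (Ssum G v : ℤ) + b * (Tsum G v : ℤ) := by
    rw [hSv, hTv, Finset.mul_sum, Finset.mul_sum, ← Finset.sum_add_distrib]
    apply Finset.sum_congr rfl
    intro x _
    simp only [Sym2.lift_mk]; rfl
  have hedge : Sym2.lift ⟨fun x y => (deg G' x : ℤ) ^ 2 * (deg G' y) + (deg G' x) * (deg G' y) ^ 2,
        fun x y => by ring⟩ s(u, v) = (a + 1) ^ 2 * (b + 1) + (a + 1) * (b + 1) ^ 2 := by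
    simp only [Sym2.lift_mk]
    rw [hdu, hdv]
  rw [hrest, hu', hv', hu0, hv0, hedge]
  ring

end LMRIV
end

section
/- Let a, b be real numbers with a ≥ 1 and b ≥ 1, and let x be any real number. Then x²/a + (2ab + a + b − x)²/b + (2a+3)·x + (2b+3)·(2ab + a + b − x) > 3a²b + 3ab² + 8ab + 2a² + 2b² + 4a + 4b. -/
/-!
Both quadratic terms are bounded below by their tangent lines, `x² / a ≥ 2(b+1)x - a(b+1)²` and
`y² / b ≥ 2(a+1)y - b(a+1)²` with `y = 2ab + a + b - x`. Since `x + y = 2ab + a + b` is fixed, the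
resulting lower bound no longer depends on `x`, and it exceeds the right-hand side by exactly `2ab > 0`.
-/

lemma two_mul_mul_sub_mul_sq_le_sq_div {a : ℝ} (ha : 0 < a) (c x : ℝ) :
    2 * c * x - a * c ^ 2 ≤ x ^ 2 / a := by
  rw [le_div_iff₀ ha]
  nlinarith [sq_nonneg (x - a * c)]

/-- For reals `a ≥ 1`, `b ≥ 1` and any real `x`,
`x²/a + (2ab+a+b−x)²/b + (2a+3)x + (2b+3)(2ab+a+b−x) > 3a²b + 3ab² + 8ab + 2a² + 2b² + 4a + 4b`. -/
theorem strict_inequality (a b x : ℝ) (ha : 1 ≤ a) (hb : 1 ≤ b) :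
    3*a^2*b + 3*a*b^2 + 8*a*b + 2*a^2 + 2*b^2 + 4*a + 4*b <
      x^2/a + (2*a*b + a + b - x)^2/b + (2*a + 3)*x + (2*b + 3)*(2*a*b + a + b - x) := by
  have ha₀ : 0 < a := by linarith
  have hb₀ : 0 < b := by linarith
  have hx := two_mul_mul_sub_mul_sq_le_sq_div ha₀ (b + 1) x
  have hy := two_mul_mul_sub_mul_sq_le_sq_div hb₀ (a + 1) (2*a*b + a + b - x)
  linear_combination hx + hy + 2 * mul_pos ha₀ hb₀
end
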